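/- arXiv:2306.12947 — 3 statements merged into one kernel-verified Lean document; each statement's English description precedes it below -/
import Mathlib

section
/- Let P, Q be n×n complex matrices with PP* - QQ* = I and PQᵀ = QPᵀ, with P invertible. Then the inverse of the block matrix k = [[P, Q],[conj(Q), conj(P)]] is [[P*, -Qᵀ],[-Q*, Pᵀ]]. -/
open Matrix

theorem stmt_2 {n : ℕ} (P Q : Matrix (Fin n) (Fin n) ℂ)
    (h1 : P * Pᴴ - Q * Qᴴ = 1) (h2 : P * Qᵀ = Q * Pᵀ) (hP : IsUnit P.det) :
    (fromBlocks P Q (Q.map (starRingEnd ℂ)) (P.map (starRingEnd ℂ)))⁻¹ =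
      fromBlocks Pᴴ (-Qᵀ) (-Qᴴ) Pᵀ := by
  apply inv_eq_right_inv
  rw [fromBlocks_multiply]
  have hPH : Pᴴ = (P.map (starRingEnd ℂ))ᵀ := rfl
  have hQH : Qᴴ = (Q.map (starRingEnd ℂ))ᵀ := rfl
  have e11 : P * Pᴴ + Q * -Qᴴ = 1 := by rw [mul_neg, ← sub_eq_add_neg, h1]
  have e12 : P * -Qᵀ + Q * Pᵀ = 0 := by rw [mul_neg, neg_add_eq_zero, h2]
  have e21 : Q.map (starRingEnd ℂ) * Pᴴ + P.map (starRingEnd ℂ) * -Qᴴ = 0 := by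
    rw [hPH, hQH, mul_neg, ← transpose_map, ← transpose_map, ← Matrix.map_mul,
      ← Matrix.map_mul, h2, add_neg_cancel]
  have e22 : Q.map (starRingEnd ℂ) * -Qᵀ + P.map (starRingEnd ℂ) * Pᵀ = 1 := by
    have hPt : Pᵀ = Pᴴ.map (starRingEnd ℂ) := by
      ext i j; simp [conjTranspose_apply]
    have hQt : Qᵀ = Qᴴ.map (starRingEnd ℂ) := by
      ext i j; simp [conjTranspose_apply]
    rw [hPt, hQt, mul_neg, ← Matrix.map_mul, ← Matrix.map_mul, ← sub_eq_neg_add,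
      ← Matrix.map_sub _ (map_sub _), h1]
    ext i j
    by_cases h : i = j <;> simp [Matrix.one_apply, h]
  rw [e11, e12, e21, e22, ← fromBlocks_one]
end

section
/- Let a, d, p be n×n complex matrices and suppose the 2n×2n block matrix N = [[-a, I+pᵀ],[I+p, d]] is invertible with inverse [[α, β],[γ, δ]]. Then [[a, I-pᵀ],[p-I, d]]·[[α, β],[γ, δ]]·[[a, pᵀ-I],[I-p, d]] = [[4δ-a, 3I-4γ-pᵀ],[3I-4β-p, 4α+d]]. -/
open Matrix

theorem stmt_6 {n : ℕ} (a d p α β γ δ : Matrix (Fin n) (Fin n) ℂ)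
    (h1 : fromBlocks (-a) (1 + pᵀ) (1 + p) d * fromBlocks α β γ δ = 1)
    (h2 : fromBlocks α β γ δ * fromBlocks (-a) (1 + pᵀ) (1 + p) d = 1) :
    fromBlocks a (1 - pᵀ) (p - 1) d * fromBlocks α β γ δ *
        fromBlocks a (pᵀ - 1) (1 - p) d =
      fromBlocks ((4 : ℂ) • δ - a) ((3 : ℂ) • 1 - (4 : ℂ) • γ - pᵀ)
        ((3 : ℂ) • 1 - (4 : ℂ) • β - p) ((4 : ℂ) • α + d) := by
  rw [← fromBlocks_one, fromBlocks_multiply, fromBlocks_inj] at h1 h2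
  obtain ⟨e11, e12, e21, e22⟩ := h1
  obtain ⟨f11, f12, f21, f22⟩ := h2
  rw [fromBlocks_multiply, fromBlocks_multiply, fromBlocks_inj]
  refine ⟨?_, ?_, ?_, ?_⟩
  · linear_combination (norm := (noncomm_ring; module))
      -(e11 * a) - e12 * (1 - p) - 2 * f21
  · linear_combination (norm := (noncomm_ring; module))
      -(e11 * (pᵀ - 1)) - e12 * d + 2 * f22
  · linear_combination (norm := (noncomm_ring; module))
      e21 * a + e22 * (1 - p) + 2 * f11
  · linear_combination (norm := (noncomm_ring; module))
      e21 * (pᵀ - 1) + e22 * d - 2 * f12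
end

section
/- Let P, Q be n×n complex matrices with PP* - QQ* = I and PQᵀ = QPᵀ, with P invertible, let k = [[P, Q],[conj(Q), conj(P)]], J = [[0,I],[-I,0]], and suppose k + I₂ₙ is invertible with [[α,β],[γ,δ]] the inverse of [[-conj(Q)P⁻¹, I+(Pᵀ)⁻¹],[I+P⁻¹, P⁻¹Q]]. Then (1/2)·J(k - I₂ₙ)(k + I₂ₙ)⁻¹ = [[δ, (1/2)I - γ],[(1/2)I - β, α]]. -/
open Matrix

private lemma my_fromBlocks_sub {l m n o R : Type*} [Sub R]
    (A : Matrix n l R) (B : Matrix n m R) (C : Matrix o l R) (D : Matrix o m R)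
    (A' : Matrix n l R) (B' : Matrix n m R) (C' : Matrix o l R) (D' : Matrix o m R) :
    fromBlocks A B C D - fromBlocks A' B' C' D'
      = fromBlocks (A - A') (B - B') (C - C') (D - D') := by
  ext (i | i) (j | j) <;> simp [fromBlocks]

theorem stmt_9 {n : ℕ} (P Q α β γ δ : Matrix (Fin n) (Fin n) ℂ)
    (h1 : P * Pᴴ - Q * Qᴴ = 1) (h2 : P * Qᵀ = Q * Pᵀ) (hP : IsUnit P.det)
    (k : Matrix (Fin n ⊕ Fin n) (Fin n ⊕ Fin n) ℂ)
    (hk : k = fromBlocks P Q (Q.map (starRingEnd ℂ)) (P.map (starRingEnd ℂ)))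
    (hkI : IsUnit (k + 1).det)
    (hinv1 : fromBlocks (-(Q.map (starRingEnd ℂ) * P⁻¹)) (1 + (Pᵀ)⁻¹) (1 + P⁻¹) (P⁻¹ * Q) *
        fromBlocks α β γ δ = 1)
    (hinv2 : fromBlocks α β γ δ *
        fromBlocks (-(Q.map (starRingEnd ℂ) * P⁻¹)) (1 + (Pᵀ)⁻¹) (1 + P⁻¹) (P⁻¹ * Q) = 1) :
    (1 / 2 : ℂ) • (fromBlocks 0 1 (-1) 0 * (k - 1) * (k + 1)⁻¹) =
      fromBlocks δ ((1 / 2 : ℂ) • 1 - γ) ((1 / 2 : ℂ) • 1 - β) α := by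
  have hP1 : P⁻¹ * P = 1 := nonsing_inv_mul P hP
  have hP2 : P * P⁻¹ = 1 := mul_nonsing_inv P hP
  have hPdetT : IsUnit (Pᵀ).det := by rwa [det_transpose]
  have hPt1 : (Pᵀ)⁻¹ * Pᵀ = 1 := nonsing_inv_mul _ hPdetT
  have hPt2 : Pᵀ * (Pᵀ)⁻¹ = 1 := mul_nonsing_inv _ hPdetT
  -- conjugate facts
  have hPcT : (Pᴴ).map (starRingEnd ℂ) = Pᵀ := by
    ext i j
    simp [conjTranspose_apply]
  have hQcT : (Qᴴ).map (starRingEnd ℂ) = Qᵀ := by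
    ext i j
    simp [conjTranspose_apply]
  have hone : (1 : Matrix (Fin n) (Fin n) ℂ).map (starRingEnd ℂ) = 1 :=
    Matrix.map_one _ (map_zero _) (map_one _)
  have h1' : P * Pᴴ = 1 + Q * Qᴴ := by rwa [sub_eq_iff_eq_add] at h1
  have hmap : P.map (starRingEnd ℂ) * Pᵀ = 1 + Q.map (starRingEnd ℂ) * Qᵀ := by
    have := congrArg (fun M => M.map (starRingEnd ℂ)) h1'
    simpa [Matrix.map_mul, Matrix.map_add, hone, hPcT, hQcT] using this
  -- key identity E1
  have E1 : Q.map (starRingEnd ℂ) * P⁻¹ * Q = P.map (starRingEnd ℂ) - (Pᵀ)⁻¹ := by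
    have e : Q.map (starRingEnd ℂ) * P⁻¹ * Q * Pᵀ
        = (P.map (starRingEnd ℂ) - (Pᵀ)⁻¹) * Pᵀ := by
      calc Q.map (starRingEnd ℂ) * P⁻¹ * Q * Pᵀ
          = Q.map (starRingEnd ℂ) * P⁻¹ * (P * Qᵀ) := by rw [mul_assoc, ← h2]
        _ = Q.map (starRingEnd ℂ) * Qᵀ := by
            rw [← mul_assoc, mul_assoc (Q.map (starRingEnd ℂ)), hP1, mul_one]
        _ = (P.map (starRingEnd ℂ) - (Pᵀ)⁻¹) * Pᵀ := by
            rw [sub_mul, hPt1, hmap]; abel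
    have := congrArg (· * (Pᵀ)⁻¹) e
    simpa [mul_assoc, hPt2] using this
  -- extract the four relations from hinv2
  rw [show (1 : Matrix (Fin n ⊕ Fin n) (Fin n ⊕ Fin n) ℂ) = fromBlocks 1 0 0 1
    from fromBlocks_one.symm, fromBlocks_multiply, fromBlocks_inj] at hinv2
  obtain ⟨r1, r2, r3, r4⟩ := hinv2
  -- basic simplifications
  have sA : -(Q.map (starRingEnd ℂ) * P⁻¹) * P = -(Q.map (starRingEnd ℂ)) := by
    rw [neg_mul, mul_assoc, hP1, mul_one]
  have sB : (1 + P⁻¹) * P = P + 1 := by rw [add_mul, one_mul, hP1]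
  have sAQ : -(Q.map (starRingEnd ℂ) * P⁻¹) * (-Q) + (1 + (Pᵀ)⁻¹)
      = P.map (starRingEnd ℂ) + 1 := by
    rw [neg_mul_neg, E1]; abel
  have sBQ : (1 + P⁻¹) * (-Q) + P⁻¹ * Q = -Q := by
    rw [add_mul, one_mul, mul_neg]; abel
  -- four block identities
  have hA : γ * Q.map (starRingEnd ℂ) = δ * (P + 1) := by
    have hA' : γ * -(Q.map (starRingEnd ℂ)) + δ * (P + 1) = 0 := by
      calc γ * -(Q.map (starRingEnd ℂ)) + δ * (P + 1)
          = γ * (-(Q.map (starRingEnd ℂ) * P⁻¹) * P) + δ * ((1 + P⁻¹) * P) := by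
            rw [sA, sB]
        _ = (γ * -(Q.map (starRingEnd ℂ) * P⁻¹) + δ * (1 + P⁻¹)) * P := by noncomm_ring
        _ = 0 * P := by rw [r3]
        _ = 0 := zero_mul P
    rw [mul_neg, add_comm, ← sub_eq_add_neg, sub_eq_zero] at hA'
    exact hA'.symm
  have hB2 : γ * (P.map (starRingEnd ℂ) + 1) = 1 + δ * Q := by
    have hB' : γ * (P.map (starRingEnd ℂ) + 1) + δ * (-Q) = 1 := by
      calc γ * (P.map (starRingEnd ℂ) + 1) + δ * (-Q)
          = γ * (-(Q.map (starRingEnd ℂ) * P⁻¹) * (-Q) + (1 + (Pᵀ)⁻¹))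
              + δ * ((1 + P⁻¹) * (-Q) + P⁻¹ * Q) := by rw [sAQ, sBQ]
        _ = (γ * -(Q.map (starRingEnd ℂ) * P⁻¹) + δ * (1 + P⁻¹)) * (-Q)
              + (γ * (1 + (Pᵀ)⁻¹) + δ * (P⁻¹ * Q)) := by noncomm_ring
        _ = 0 * (-Q) + 1 := by rw [r3, r4]
        _ = 1 := by rw [zero_mul, zero_add]
    rwa [mul_neg, ← sub_eq_add_neg, sub_eq_iff_eq_add] at hB'
  have hC2 : β * (P + 1) = P + α * Q.map (starRingEnd ℂ) := by
    have hC' : α * -(Q.map (starRingEnd ℂ)) + β * (P + 1) = P := by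
      calc α * -(Q.map (starRingEnd ℂ)) + β * (P + 1)
          = α * (-(Q.map (starRingEnd ℂ) * P⁻¹) * P) + β * ((1 + P⁻¹) * P) := by
            rw [sA, sB]
        _ = (α * -(Q.map (starRingEnd ℂ) * P⁻¹) + β * (1 + P⁻¹)) * P := by noncomm_ring
        _ = 1 * P := by rw [r1]
        _ = P := one_mul P
    rwa [mul_neg, add_comm, ← sub_eq_add_neg, sub_eq_iff_eq_add] at hC'
  have hD2 : α * (P.map (starRingEnd ℂ) + 1) = -Q + β * Q := by
    have hD' : α * (P.map (starRingEnd ℂ) + 1) + β * (-Q) = -Q := by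
      calc α * (P.map (starRingEnd ℂ) + 1) + β * (-Q)
          = α * (-(Q.map (starRingEnd ℂ) * P⁻¹) * (-Q) + (1 + (Pᵀ)⁻¹))
              + β * ((1 + P⁻¹) * (-Q) + P⁻¹ * Q) := by rw [sAQ, sBQ]
        _ = (α * -(Q.map (starRingEnd ℂ) * P⁻¹) + β * (1 + P⁻¹)) * (-Q)
              + (α * (1 + (Pᵀ)⁻¹) + β * (P⁻¹ * Q)) := by noncomm_ring
        _ = 1 * (-Q) + 0 := by rw [r1, r2]
        _ = -Q := by rw [one_mul, add_zero]
    rwa [mul_neg, ← sub_eq_add_neg, sub_eq_iff_eq_add] at hD'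
  -- the key equation
  have key : (1 / 2 : ℂ) • (fromBlocks 0 1 (-1) 0 * (k - 1))
      = fromBlocks δ ((1 / 2 : ℂ) • 1 - γ) ((1 / 2 : ℂ) • 1 - β) α * (k + 1) := by
    rw [hk, show (1 : Matrix (Fin n ⊕ Fin n) (Fin n ⊕ Fin n) ℂ) = fromBlocks 1 0 0 1
      from fromBlocks_one.symm, my_fromBlocks_sub, fromBlocks_add,
      fromBlocks_multiply, fromBlocks_multiply, fromBlocks_smul, fromBlocks_inj]
    refine ⟨?_, ?_, ?_, ?_⟩
    · simp only [zero_mul, one_mul, zero_add, add_zero, sub_zero, sub_mul, smul_mul_assoc]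
      rw [hA]
      module
    · simp only [zero_mul, one_mul, zero_add, add_zero, sub_zero, sub_mul, smul_mul_assoc]
      rw [hB2]
      module
    · simp only [neg_one_mul, zero_mul, zero_add, add_zero, sub_zero, sub_mul, smul_mul_assoc, one_mul]
      rw [hC2]
      module
    · simp only [neg_one_mul, zero_mul, zero_add, add_zero, sub_zero, sub_mul, smul_mul_assoc, one_mul]
      rw [hD2]
      module
  calc (1 / 2 : ℂ) • (fromBlocks 0 1 (-1) 0 * (k - 1) * (k + 1)⁻¹)
      = ((1 / 2 : ℂ) • (fromBlocks 0 1 (-1) 0 * (k - 1))) * (k + 1)⁻¹ := by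
        rw [smul_mul_assoc]
    _ = fromBlocks δ ((1 / 2 : ℂ) • 1 - γ) ((1 / 2 : ℂ) • 1 - β) α * ((k + 1) * (k + 1)⁻¹) := by
        rw [key, mul_assoc]
    _ = fromBlocks δ ((1 / 2 : ℂ) • 1 - γ) ((1 / 2 : ℂ) • 1 - β) α := by
        rw [mul_nonsing_inv _ hkI, mul_one]
end
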